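/- Let T' and S' be rooted binary trees on the same leaf set X with identical left-to-right leaf orderings, |X| = N. Suppose some leaf x and leaf subset Y ⊆ X satisfy: lca_{T'}(Y) is a strict descendant of lca_{T'}(Y ∪ {x}) and lca_{S'}(Y) is a strict descendant of lca_{S'}(Y ∪ {x}). Then for any A ⊆ Y with T'|A = S'|A, the set A ∪ {x} also satisfies T'|(A ∪ {x}) = S'|(A ∪ {x}), and if T'|A is a caterpillar then so is T'|(A ∪ {x}). -/

import Mathlib

/-!
If `lca Y` lies strictly below `lca (Y ∪ {x})`, then at the node `lca (Y ∪ {x})` the set `Y`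
lies below one child and `x` below the other. Hence for every nonempty `A ⊆ Y` the restriction
to `A ∪ {x}` is `t|A` with `x` attached as a sibling of its root, in either tree, and both
agreement and the caterpillar shape pass from `A` to `A ∪ {x}`.
-/

/-- Rooted binary trees with leaves labeled by `X` (with designated left/right children). -/
inductive BTree (X : Type) where
  | leaf : X → BTree X
  | node : BTree X → BTree X → BTree X

namespace BTree

variable {X : Type} [DecidableEq X]

/-- Left-to-right (pre-order) leaf sequence. -/
def seq : BTree X → List X
  | leaf x => [x]
  | node l r => seq l ++ seq r

/-- Leaf set. -/
def leaves (t : BTree X) : Finset X := t.seq.toFinset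

/-- Number of leaves. -/
def size (t : BTree X) : ℕ := t.seq.length

/-- A phylogenetic tree: leaves are bijectively labeled (no repeated labels). -/
def Phylo (t : BTree X) : Prop := t.seq.Nodup

def isLeaf : BTree X → Prop
  | leaf _ => True
  | node _ _ => False

/-- A rooted caterpillar: every internal node (including the root) has a leaf child. -/
def isCaterpillar : BTree X → Prop
  | leaf _ => True
  | node l r => (isLeaf l ∧ isCaterpillar r) ∨ (isLeaf r ∧ isCaterpillar l)

/-- A perfectly balanced binary tree. -/
def isPerfect : BTree X → Prop
  | leaf _ => True
  | node l r => isPerfect l ∧ isPerfect r ∧ size l = size r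

/-- Restriction `T|A`: minimal subtree spanning the leaves in `A`, with degree-two
vertices suppressed; `none` if `A` contains no leaf of the tree. -/
def restrict : BTree X → Finset X → Option (BTree X)
  | leaf x, A => if x ∈ A then some (leaf x) else none
  | node l r, A =>
    match restrict l A, restrict r A with
    | some l', some r' => some (node l' r')
    | some l', none => some l'
    | none, some r' => some r'
    | none, none => none

/-- Nodes of a tree are addressed by root-paths: `false` = go left, `true` = go right.
`subtreeAt t p` is the subtree rooted at the node with address `p` (if it exists). -/
def subtreeAt : BTree X → List Bool → Option (BTree X)
  | t, [] => some t
  | leaf _, _ :: _ => none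
  | node l _, false :: p => subtreeAt l p
  | node _ r, true :: p => subtreeAt r p

/-- Address of the least common ancestor of a set of leaves. -/
def lcaPos : BTree X → Finset X → List Bool
  | leaf _, _ => []
  | node l r, A =>
    if A ⊆ l.leaves then false :: lcaPos l A
    else if A ⊆ r.leaves then true :: lcaPos r A
    else []

/-- `v ⪯ u` in the ancestor order iff the address of `u` is a prefix of the address of `v`.
Two nodes are incomparable if neither address is a prefix of the other. -/
def Incomp (p q : List Bool) : Prop := ¬ p <+: q ∧ ¬ q <+: p

/-- `StrictBelow p q`: the node at address `p` is a strict descendant of the node at `q`. -/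
def StrictBelow (p q : List Bool) : Prop := q <+: p ∧ p ≠ q

/-- Identity of rooted phylogenetic trees: label-preserving graph isomorphism
(the left/right designation is irrelevant). -/
def REq : BTree X → BTree X → Prop
  | leaf x, leaf y => x = y
  | node l r, node l' r' => (REq l l' ∧ REq r r') ∨ (REq l r' ∧ REq r l')
  | _, _ => False

/-- The splits (edge-induced leaf bipartitions, each recorded by both of its sides)
of the unrooted tree obtained by de-rooting `t`. -/
def usplits (t : BTree X) : Set (Finset X) :=
  { A | ∃ p u, t.subtreeAt p = some u ∧ (A = u.leaves ∨ A = t.leaves \ u.leaves) }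

/-- `t` and `s` de-root to identical unrooted phylogenetic trees. -/
def UEq (t s : BTree X) : Prop := t.leaves = s.leaves ∧ usplits t = usplits s

/-- Rooted agreement of `t` and `s` on leaf set `A`: `t|A = s|A` as rooted trees. -/
def RAgree (t s : BTree X) (A : Finset X) : Prop :=
  ∃ t' s', t.restrict A = some t' ∧ s.restrict A = some s' ∧ REq t' s'

/-- Unrooted agreement of (the de-rootings of) `t` and `s` on leaf set `A`. -/
def UAgree (t s : BTree X) (A : Finset X) : Prop :=
  ∃ t' s', t.restrict A = some t' ∧ s.restrict A = some s' ∧ UEq t' s'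

/-- `t` de-roots to an unrooted caterpillar. -/
def UCaterpillar (t : BTree X) : Prop := ∃ c : BTree X, isCaterpillar c ∧ UEq c t

/-- The subtrees hanging off the path from the left-most leaf to the root
(`Q_1, …, Q_k` in the paper; `Q_1` is the left-most leaf itself). -/
def leftSpine : BTree X → List (BTree X)
  | leaf x => [leaf x]
  | node l r => leftSpine l ++ [r]

/-- The subtrees hanging off the path from the root to the right-most leaf
(`R_1, …, R_m` in the paper; `R_m` is the right-most leaf itself). -/
def rightSpine : BTree X → List (BTree X)
  | leaf x => [leaf x]
  | node l r => l :: rightSpine r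

/-- Graph distance (number of edges) between leaves `x` and `y` in the unrooted
tree obtained by de-rooting `t` (the suppressed root accounts for the `-1`). -/
def udist (t : BTree X) (x y : X) : ℕ :=
  (lcaPos t {x}).length - (lcaPos t {x, y}).length +
    ((lcaPos t {y}).length - (lcaPos t {x, y}).length) -
    (if lcaPos t {x, y} = [] then 1 else 0)

end BTree

namespace BTree

variable {X : Type}

lemma Phylo.left {l r : BTree X} (h : (node l r).Phylo) : l.Phylo :=
  List.Nodup.of_append_left (l₂ := r.seq) h

lemma Phylo.right {l r : BTree X} (h : (node l r).Phylo) : r.Phylo :=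
  List.Nodup.of_append_right (l₁ := l.seq) h

variable [DecidableEq X]

lemma mem_leaves_leaf {x y : X} : y ∈ (leaf x).leaves ↔ y = x := by
  simp [leaves, seq]

lemma mem_leaves_node {l r : BTree X} {y : X} :
    y ∈ (node l r).leaves ↔ y ∈ l.leaves ∨ y ∈ r.leaves := by
  simp [leaves, seq]

lemma Phylo.disjoint {l r : BTree X} (h : (node l r).Phylo) : Disjoint l.leaves r.leaves := by
  rw [Finset.disjoint_left]
  intro y hl hr
  exact List.disjoint_of_nodup_append (l₁ := l.seq) h (List.mem_toFinset.mp hl)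
    (List.mem_toFinset.mp hr)

lemma restrict_congr {S S' : Finset X} :
    ∀ u : BTree X, (∀ y ∈ u.leaves, y ∈ S ↔ y ∈ S') → u.restrict S = u.restrict S'
  | leaf y, h => by
    simp only [restrict, if_congr (h y (mem_leaves_leaf.mpr rfl)) rfl rfl]
  | node l r, h => by
    simp only [restrict,
      restrict_congr l fun y hy => h y (mem_leaves_node.mpr (.inl hy)),
      restrict_congr r fun y hy => h y (mem_leaves_node.mpr (.inr hy))]

lemma restrict_eq_none {S : Finset X} :
    ∀ u : BTree X, Disjoint u.leaves S → u.restrict S = none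
  | leaf y, h => by
    simp [restrict, Finset.disjoint_left.mp h (mem_leaves_leaf.mpr rfl)]
  | node l r, h => by
    have hlr : l.leaves ⊆ (node l r).leaves ∧ r.leaves ⊆ (node l r).leaves :=
      ⟨fun _ hy => mem_leaves_node.mpr (.inl hy), fun _ hy => mem_leaves_node.mpr (.inr hy)⟩
    rw [restrict, restrict_eq_none l (h.mono_left hlr.1), restrict_eq_none r (h.mono_left hlr.2)]

lemma exists_mem_of_restrict_eq_some {u v : BTree X} {S : Finset X}
    (h : u.restrict S = some v) : ∃ a ∈ S, a ∈ u.leaves := by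
  by_contra! hS
  simp [restrict_eq_none u (Finset.disjoint_right.mpr hS)] at h

lemma restrict_singleton {x : X} : ∀ u : BTree X,
    u.Phylo → x ∈ u.leaves → u.restrict {x} = some (leaf x)
  | leaf y, _, hx => by
    obtain rfl := mem_leaves_leaf.mp hx
    simp [restrict]
  | node l r, hp, hx => by
    have hd := hp.disjoint
    rcases mem_leaves_node.mp hx with hxl | hxr
    · have hr : Disjoint r.leaves {x} :=
        Finset.disjoint_singleton_right.mpr (Finset.disjoint_left.mp hd hxl)
      simp [restrict, restrict_singleton l hp.left hxl, restrict_eq_none r hr]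
    · have hl : Disjoint l.leaves {x} :=
        Finset.disjoint_singleton_right.mpr (Finset.disjoint_right.mp hd hxr)
      simp [restrict, restrict_singleton r hp.right hxr, restrict_eq_none l hl]

lemma restrict_insert_of_notMem {u : BTree X} {x : X} {S : Finset X} (hx : x ∉ u.leaves) :
    u.restrict (insert x S) = u.restrict S :=
  restrict_congr u fun y hy => by
    rw [Finset.mem_insert, or_iff_right (by rintro rfl; exact hx hy)]

lemma restrict_insert_of_disjoint {u : BTree X} {x : X} {S : Finset X} (hu : u.Phylo)
    (hx : x ∈ u.leaves) (hS : Disjoint u.leaves S) :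
    u.restrict (insert x S) = some (leaf x) := by
  rw [← restrict_singleton u hu hx]
  refine restrict_congr u fun y hy => ?_
  rw [Finset.mem_insert, Finset.mem_singleton, or_iff_left (Finset.disjoint_left.mp hS hy)]

lemma restrict_node_of_subset_left {l r : BTree X} {S : Finset X}
    (hd : Disjoint l.leaves r.leaves) (hS : S ⊆ l.leaves) :
    (node l r).restrict S = l.restrict S := by
  rw [restrict, restrict_eq_none r (hd.symm.mono_right hS)]
  cases l.restrict S <;> rfl

lemma restrict_node_of_subset_right {l r : BTree X} {S : Finset X}
    (hd : Disjoint l.leaves r.leaves) (hS : S ⊆ r.leaves) :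
    (node l r).restrict S = r.restrict S := by
  rw [restrict, restrict_eq_none l (hd.mono_right hS)]
  cases r.restrict S <;> rfl

lemma lcaPos_node_of_subset_left {l r : BTree X} {S : Finset X} (hS : S ⊆ l.leaves) :
    lcaPos (node l r) S = false :: lcaPos l S := by
  simp [lcaPos, hS]

lemma lcaPos_node_of_subset_right {l r : BTree X} {S : Finset X}
    (hd : Disjoint l.leaves r.leaves) (hne : S.Nonempty) (hS : S ⊆ r.leaves) :
    lcaPos (node l r) S = true :: lcaPos r S := by
  obtain ⟨a, ha⟩ := hne
  have hSl : ¬ S ⊆ l.leaves := fun h => Finset.disjoint_left.mp hd (h ha) (hS ha)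
  simp [lcaPos, hSl, hS]

lemma lcaPos_node_of_not_subset {l r : BTree X} {S : Finset X}
    (hl : ¬ S ⊆ l.leaves) (hr : ¬ S ⊆ r.leaves) : lcaPos (node l r) S = [] := by
  simp [lcaPos, hl, hr]

lemma subset_or_subset_of_lcaPos_ne_nil {l r : BTree X} {S : Finset X}
    (h : lcaPos (node l r) S ≠ []) : S ⊆ l.leaves ∨ S ⊆ r.leaves := by
  by_contra! hS
  exact h (lcaPos_node_of_not_subset hS.1 hS.2)

lemma strictBelow_cons_cons {b : Bool} {p q : List Bool} :
    StrictBelow (b :: p) (b :: q) ↔ StrictBelow p q := by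
  simp [StrictBelow, List.cons_prefix_cons]

lemma restrict_node_insert_of_subset_left {l r ta : BTree X} {A : Finset X} {x : X}
    (hp : (node l r).Phylo) (hA : A ⊆ l.leaves) (hx : x ∈ r.leaves)
    (hta : l.restrict A = some ta) :
    (node l r).restrict (insert x A) = some (node ta (leaf x)) := by
  have hxl : x ∉ l.leaves := Finset.disjoint_right.mp hp.disjoint hx
  simp [restrict, restrict_insert_of_notMem hxl, hta,
    restrict_insert_of_disjoint hp.right hx (hp.disjoint.symm.mono_right hA)]

lemma restrict_node_insert_of_subset_right {l r ta : BTree X} {A : Finset X} {x : X}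
    (hp : (node l r).Phylo) (hA : A ⊆ r.leaves) (hx : x ∈ l.leaves)
    (hta : r.restrict A = some ta) :
    (node l r).restrict (insert x A) = some (node (leaf x) ta) := by
  have hxr : x ∉ r.leaves := Finset.disjoint_left.mp hp.disjoint hx
  simp [restrict, restrict_insert_of_notMem hxr, hta,
    restrict_insert_of_disjoint hp.left hx (hp.disjoint.mono_right hA)]

theorem Phylo.restrict_insert_eq {x : X} {t ta : BTree X} {A Y : Finset X}
    (ht : t.Phylo) (hx : x ∈ t.leaves) (hAY : A ⊆ Y)
    (hlca : StrictBelow (lcaPos t Y) (lcaPos t (insert x Y)))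
    (hta : t.restrict A = some ta) :
    t.restrict (insert x A) = some (node ta (leaf x)) ∨
      t.restrict (insert x A) = some (node (leaf x) ta) := by
  induction t generalizing A Y with
  | leaf _ => exact absurd rfl hlca.2
  | node l r ihl ihr =>
    have hd := ht.disjoint
    by_cases hl : insert x Y ⊆ l.leaves
    · have hYl := (Finset.subset_insert x Y).trans hl
      rw [lcaPos_node_of_subset_left hYl, lcaPos_node_of_subset_left hl,
        strictBelow_cons_cons] at hlca
      rw [restrict_node_of_subset_left hd (hAY.trans hYl)] at hta
      rw [restrict_node_of_subset_left hd (Finset.insert_subset_insert x hAY |>.trans hl)]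
      exact ihl ht.left (hl (Finset.mem_insert_self x Y)) hAY hlca hta
    obtain ⟨a, ha, -⟩ := exists_mem_of_restrict_eq_some hta
    have hYne : Y.Nonempty := ⟨a, hAY ha⟩
    by_cases hr : insert x Y ⊆ r.leaves
    · have hYr := (Finset.subset_insert x Y).trans hr
      rw [lcaPos_node_of_subset_right hd hYne hYr,
        lcaPos_node_of_subset_right hd (Finset.insert_nonempty x Y) hr,
        strictBelow_cons_cons] at hlca
      rw [restrict_node_of_subset_right hd (hAY.trans hYr)] at hta
      rw [restrict_node_of_subset_right hd (Finset.insert_subset_insert x hAY |>.trans hr)]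
      exact ihr ht.right (hr (Finset.mem_insert_self x Y)) hAY hlca hta
    rw [lcaPos_node_of_not_subset hl hr] at hlca
    rcases subset_or_subset_of_lcaPos_ne_nil hlca.2 with hYl | hYr
    · have hxr : x ∈ r.leaves :=
        (mem_leaves_node.mp hx).resolve_left fun hxl => hl (Finset.insert_subset hxl hYl)
      rw [restrict_node_of_subset_left hd (hAY.trans hYl)] at hta
      exact .inl (restrict_node_insert_of_subset_left ht (hAY.trans hYl) hxr hta)
    · have hxl : x ∈ l.leaves :=
        (mem_leaves_node.mp hx).resolve_right fun hxr => hr (Finset.insert_subset hxr hYr)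
      rw [restrict_node_of_subset_right hd (hAY.trans hYr)] at hta
      exact .inr (restrict_node_insert_of_subset_right ht (hAY.trans hYr) hxl hta)

end BTree

open BTree

theorem good_pair_extension_general {X : Type} [DecidableEq X]
    (t s : BTree X) (ht : t.Phylo) (hs : s.Phylo) (hseq : t.seq = s.seq)
    (x : X) (hx : x ∈ t.leaves) (Y : Finset X)
    (hT : StrictBelow (lcaPos t Y) (lcaPos t (insert x Y)))
    (hS : StrictBelow (lcaPos s Y) (lcaPos s (insert x Y)))
    (A : Finset X) (hA : A ⊆ Y)
    (ta sa : BTree X)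
    (hta : t.restrict A = some ta) (hsa : s.restrict A = some sa)
    (hag : REq ta sa) :
    ∃ ta' sa' : BTree X,
      t.restrict (insert x A) = some ta' ∧ s.restrict (insert x A) = some sa' ∧
      REq ta' sa' ∧ (ta.isCaterpillar → ta'.isCaterpillar) := by
  have hxs : x ∈ s.leaves := by rwa [leaves, ← hseq]
  rcases ht.restrict_insert_eq hx hA hT hta with h₁ | h₁ <;>
    rcases hs.restrict_insert_eq hxs hA hS hsa with h₂ | h₂ <;>
    exact ⟨_, _, h₁, h₂, by simp [REq, hag], fun hc => by simp [isCaterpillar, isLeaf, hc]⟩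

/-- Good-pair extension: let `t`, `s` have identical pre-order leaf sequences and
suppose the leaf `x` and leaf set `Y` satisfy, in both trees, that `lca Y` is a
strict descendant of `lca (Y ∪ {x})`.  Then whenever `A ⊆ Y` is a rooted
agreement set, so is `A ∪ {x}`; moreover adding `x` preserves the caterpillar
shape of the agreement subtree. -/
theorem good_pair_extension {X : Type} [DecidableEq X]
    (t s : BTree X) (ht : t.Phylo) (hs : s.Phylo) (hseq : t.seq = s.seq)
    (x : X) (hx : x ∈ t.leaves) (Y : Finset X) (hY : Y ⊆ t.leaves)
    (hT : StrictBelow (lcaPos t Y) (lcaPos t (insert x Y)))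
    (hS : StrictBelow (lcaPos s Y) (lcaPos s (insert x Y)))
    (A : Finset X) (hA : A ⊆ Y)
    (ta sa : BTree X)
    (hta : t.restrict A = some ta) (hsa : s.restrict A = some sa)
    (hag : REq ta sa) :
    ∃ ta' sa' : BTree X,
      t.restrict (insert x A) = some ta' ∧ s.restrict (insert x A) = some sa' ∧
      REq ta' sa' ∧ (ta.isCaterpillar → ta'.isCaterpillar) :=
  good_pair_extension_general t s ht hs hseq x hx Y hT hS A hA ta sa hta hsa hag
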